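/- arXiv:2204.12062 — 2 statements merged into one kernel-verified Lean document; each statement's English description precedes it below -/
import Mathlib

section
/- (Tension between efficiency and participant fairness) There exists a virtual conference scheduling instance in which every schedule minimizing participant unfairness Ψ^P has strictly smaller total expected participation TEP than the maximum achievable TEP. Concretely: with two participants p_1, p_2, one talk t with V_{p_1}(t) = V_{p_2}(t) = 1, and three slots s_1, s_2, s_3 with A_{p_1} = (1, 0.49, 0) and A_{p_2} = (0, 0.49, 1), the unique schedule minimizing Ψ^P places t in s_2 and achieves TEP = 0.98, whereas placing t in s_1 or s_3 achieves the maximum TEP = 1 but has Ψ^P = 1. -/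
namespace Stmt5

/-- Availability scores of the two participants over the three slots. -/
noncomputable def A : Fin 2 → Fin 3 → ℝ := ![![1, 0.49, 0], ![0, 0.49, 1]]

/-- Interest score of each participant for the single talk. -/
noncomputable def V : Fin 2 → ℝ := fun _ => 1

/-- Ideal cumulative gain: best slot for the single talk. -/
noncomputable def ICG (p : Fin 2) : ℝ :=
  max (V p * A p 0) (max (V p * A p 1) (V p * A p 2))

/-- Normalized cumulative gain when the talk is placed in slot `s`. -/
noncomputable def NCG (p : Fin 2) (s : Fin 3) : ℝ := (V p * A p s) / ICG p

/-- Participant unfairness of the schedule placing the talk in slot `s`. -/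
noncomputable def Ψ (s : Fin 3) : ℝ :=
  max (NCG 0 s) (NCG 1 s) - min (NCG 0 s) (NCG 1 s)

/-- Total expected participation of the schedule placing the talk in slot `s`. -/
noncomputable def TEP (s : Fin 3) : ℝ := V 0 * A 0 s + V 1 * A 1 s

/-- tension between efficiency and participant fairness. The unique
schedule minimizing participant unfairness places the talk in s₂ with TEP = 0.98,
while the maximum TEP = 1 is achieved at s₁ or s₃ which have Ψ^P = 1. -/
theorem efficiency_participant_fairness_tension :
    (∀ s, Ψ 1 ≤ Ψ s) ∧ (∀ s, Ψ s = Ψ 1 → s = 1)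
    ∧ TEP 1 = 0.98
    ∧ (∀ s, TEP s ≤ 1) ∧ TEP 0 = 1 ∧ TEP 2 = 1
    ∧ Ψ 0 = 1 ∧ Ψ 2 = 1
    ∧ TEP 1 < TEP 0 := by
  have hA : ∀ p s, A p s = ![![1, 0.49, 0], ![0, 0.49, 1]] p s := fun _ _ => rfl
  refine ⟨?_, ?_, ?_, ?_, ?_, ?_, ?_, ?_, ?_⟩ <;>
    first
      | (intro s; fin_cases s <;> simp [Ψ, NCG, ICG, TEP, V, A] <;> norm_num)
      | (simp [Ψ, NCG, ICG, TEP, V, A] <;> norm_num)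


end Stmt5
end

section
/- (Partition reduction correctness) Let g_1, ..., g_n be nonnegative reals with G = ∑ g_i > 0. Construct a scheduling instance with two participants p_1, p_2, n talks t_1, ..., t_n, and 2n slots s_1, ..., s_{2n}, where V_{p_1}(t_i) = V_{p_2}(t_i) = g_i/G, A_{p_1}(s_i) = 1 for 1 ≤ i ≤ n and 0 otherwise, A_{p_2}(s_i) = 0 for 1 ≤ i ≤ n and 1 otherwise. Then there exists an injective schedule Γ : {t_1,...,t_n} → {s_1,...,s_{2n}} with Ψ^P(Γ) = 0 if and only if the multiset {g_1,...,g_n} can be partitioned into two disjoint subsets with equal sums. -/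
/-- partition reduction correctness. In the two-participant
instance built from nonnegative reals g₁,…,gₙ (V_p(tᵢ) = gᵢ/G, participant 1
available exactly on the first n slots, participant 2 on the last n slots,
both ICGs equal to 1), there is an injective schedule with zero participant
unfairness iff the gᵢ can be split into two disjoint subsets of equal sum. -/
theorem partition_reduction (n : ℕ) (g : Fin n → ℝ)
    (hg : ∀ i, 0 ≤ g i) (hG : 0 < ∑ j, g j) :
    (∃ Γ : Fin n → Fin (2 * n), Function.Injective Γ ∧
      |(∑ i, (g i / ∑ j, g j) * (if (Γ i).val < n then (1:ℝ) else 0))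
        - (∑ i, (g i / ∑ j, g j) * (if (Γ i).val < n then (0:ℝ) else 1))| = 0)
    ↔ ∃ I : Finset (Fin n), (∑ i ∈ I, g i) = (∑ i ∈ Iᶜ, g i) := by
  have hGne : (∑ j, g j) ≠ 0 := ne_of_gt hG
  constructor
  · rintro ⟨Γ, hinj, habs⟩
    refine ⟨Finset.univ.filter (fun i => (Γ i).val < n), ?_⟩
    rw [abs_eq_zero, sub_eq_zero] at habs
    have h1 : (∑ i, (g i / ∑ j, g j) * (if (Γ i).val < n then (1:ℝ) else 0))
        = (∑ i ∈ Finset.univ.filter (fun i => (Γ i).val < n), g i) / (∑ j, g j) := by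
      rw [Finset.sum_div, Finset.sum_filter]
      exact Finset.sum_congr rfl fun i _ => by split <;> simp
    have h2 : (∑ i, (g i / ∑ j, g j) * (if (Γ i).val < n then (0:ℝ) else 1))
        = (∑ i ∈ (Finset.univ.filter (fun i => (Γ i).val < n))ᶜ, g i) / (∑ j, g j) := by
      rw [Finset.compl_filter, Finset.sum_div, Finset.sum_filter]
      exact Finset.sum_congr rfl fun i _ => by split <;> simp_all
    rw [h1, h2, div_eq_div_iff hGne hGne] at habs
    exact mul_right_cancel₀ hGne habs
  · rintro ⟨I, hI⟩
    refine ⟨fun i => if i ∈ I then ⟨i.val, by omega⟩ else ⟨n + i.val, by omega⟩, ?_, ?_⟩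
    · intro i j hij
      by_cases hi : i ∈ I <;> by_cases hj : j ∈ I <;>
        simp only [hi, hj, if_true, if_false, Fin.mk.injEq] at hij <;>
        first
        | exact Fin.ext hij
        | exact Fin.ext (by omega)
        | (exfalso; have := i.isLt; have := j.isLt; omega)
    · have key : ∀ i : Fin n, ((if i ∈ I then (⟨i.val, by omega⟩ : Fin (2*n))
          else ⟨n + i.val, by omega⟩).val < n) ↔ i ∈ I := by
        intro i
        by_cases hi : i ∈ I <;> simp [hi, i.isLt]
      have h1 : (∑ i, (g i / ∑ j, g j) * (if ((if i ∈ I then (⟨i.val, by omega⟩ : Fin (2*n))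
          else ⟨n + i.val, by omega⟩)).val < n then (1:ℝ) else 0))
          = (∑ i ∈ I, g i) / (∑ j, g j) := by
        rw [Finset.sum_div, ← Finset.sum_filter_add_sum_filter_not Finset.univ (fun i => i ∈ I)]
        simp only [Finset.filter_univ_mem]
        rw [show (∑ i ∈ Finset.univ.filter (fun i => i ∉ I), (g i / ∑ j, g j) *
            (if ((if i ∈ I then (⟨i.val, by omega⟩ : Fin (2*n))
            else ⟨n + i.val, by omega⟩)).val < n then (1:ℝ) else 0)) = 0 from ?_]
        · rw [add_zero]
          refine Finset.sum_congr rfl fun i hi => ?_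
          rw [if_pos ((key i).mpr hi), mul_one]
        · refine Finset.sum_eq_zero fun i hi => ?_
          simp only [Finset.mem_filter] at hi
          rw [if_neg (fun h => hi.2 ((key i).mp h)), mul_zero]
      have h2 : (∑ i, (g i / ∑ j, g j) * (if ((if i ∈ I then (⟨i.val, by omega⟩ : Fin (2*n))
          else ⟨n + i.val, by omega⟩)).val < n then (0:ℝ) else 1))
          = (∑ i ∈ Iᶜ, g i) / (∑ j, g j) := by
        rw [Finset.sum_div, ← Finset.sum_filter_add_sum_filter_not Finset.univ (fun i => i ∈ I)]
        rw [show (∑ i ∈ Finset.univ.filter (fun i => i ∈ I), (g i / ∑ j, g j) *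
            (if ((if i ∈ I then (⟨i.val, by omega⟩ : Fin (2*n))
            else ⟨n + i.val, by omega⟩)).val < n then (0:ℝ) else 1)) = 0 from ?_]
        · rw [zero_add]
          have : Iᶜ = Finset.univ.filter (fun i => i ∉ I) := by
            ext i; simp
          rw [this]
          refine Finset.sum_congr rfl fun i hi => ?_
          simp only [Finset.mem_filter] at hi
          rw [if_neg (fun h => hi.2 ((key i).mp h)), mul_one]
        · refine Finset.sum_eq_zero fun i hi => ?_
          simp only [Finset.mem_filter] at hi
          rw [if_pos ((key i).mpr hi.2), mul_zero]
      rw [h1, h2, hI, sub_self, abs_zero]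
end
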